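/- arXiv:1807.08494 — 5 statements merged into one kernel-verified Lean document; each statement's English description precedes it below -/
import Mathlib

section
/- Let ν > -1, β > 0, s ≠ 0, η_∞ > 0, and define g(η) = s²(η_∞ - η) and h(η) = γ(η^{-(ν+2)} - η_∞^{-(ν+2)}) with γ = β/(ν+2). If s² < γ(ν+2)η_∞^{-(ν+3)}, then besides η = η_∞ the equation g(η) = h(η) has exactly one other positive solution η₁, and it satisfies η₁ > η_∞ together with s² > γ(ν+2)η₁^{-(ν+3)}. -/
/-- Existence and uniqueness of the second positive stationary point. -/
theorem stmt_0 (ν β s ηinf : ℝ) (hν : ν > -1) (hβ : β > 0) (hs : s ≠ 0)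
    (hηinf : ηinf > 0) (γ : ℝ) (hγ : γ = β / (ν + 2))
    (g h : ℝ → ℝ)
    (hg : ∀ η : ℝ, g η = s ^ 2 * (ηinf - η))
    (hh : ∀ η : ℝ, η > 0 → h η = γ * (η ^ (-(ν + 2)) - ηinf ^ (-(ν + 2))))
    (hsaddle : s ^ 2 < γ * (ν + 2) * ηinf ^ (-(ν + 3))) :
    ∃ η₁ : ℝ, (η₁ > 0 ∧ η₁ ≠ ηinf ∧ g η₁ = h η₁ ∧ η₁ > ηinf ∧
        s ^ 2 > γ * (ν + 2) * η₁ ^ (-(ν + 3))) ∧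
      ∀ η : ℝ, η > 0 → η ≠ ηinf → g η = h η → η = η₁ := by
  have hp0 : (0:ℝ) < ν + 2 := by linarith
  have hq0 : (0:ℝ) < ν + 3 := by linarith
  have hβγ : γ * (ν + 2) = β := by rw [hγ]; field_simp
  have hs2 : 0 < s ^ 2 := by positivity
  have hγ0 : 0 < γ := by rw [hγ]; positivity
  set q : ℝ := ν + 3 with hq
  set m : ℝ := (β / s ^ 2) ^ (q⁻¹) with hm
  have hβs : 0 < β / s ^ 2 := by positivity
  have hm0 : 0 < m := Real.rpow_pos_of_pos hβs _
  have hmq : m ^ q = β / s ^ 2 := by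
    rw [hm, ← Real.rpow_mul hβs.le, inv_mul_cancel₀ hq0.ne', Real.rpow_one]
  have hmq' : m ^ (-q) = s ^ 2 / β := by
    rw [Real.rpow_neg hm0.le, hmq, inv_div]
  -- key comparison: for x > 0, x < m ↔ s^2 < β * x ^ (-q)
  have hcmp : ∀ x : ℝ, 0 < x → (x < m ↔ s ^ 2 < β * x ^ (-q)) := by
    intro x hx
    rw [← Real.rpow_lt_rpow_iff_of_neg hm0 hx (by linarith : -q < 0), hmq',
      div_lt_iff₀ hβ, mul_comm]
  have hcmp' : ∀ x : ℝ, 0 < x → (m < x ↔ β * x ^ (-q) < s ^ 2) := by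
    intro x hx
    rw [← Real.rpow_lt_rpow_iff_of_neg hx hm0 (by linarith : -q < 0), hmq',
      lt_div_iff₀ hβ, mul_comm]
  set F : ℝ → ℝ := fun x => s ^ 2 * (ηinf - x) - γ * (x ^ (-(ν + 2)) - ηinf ^ (-(ν + 2)))
    with hF
  have hFderiv : ∀ x : ℝ, 0 < x → HasDerivAt F (β * x ^ (-q) - s ^ 2) x := by
    intro x hx
    have h1 : HasDerivAt (fun y : ℝ => y ^ (-(ν + 2))) (-(ν + 2) * x ^ (-(ν + 2) - 1)) x :=
      Real.hasDerivAt_rpow_const (Or.inl hx.ne')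
    have h2 : HasDerivAt F (s ^ 2 * (0 - 1) - γ * (-(ν + 2) * x ^ (-(ν + 2) - 1) - 0)) x :=
      (((hasDerivAt_const x ηinf).sub (hasDerivAt_id x)).const_mul (s ^ 2)).sub
        ((h1.sub (hasDerivAt_const x _)).const_mul γ)
    convert h2 using 1
    have : -(ν + 2) - 1 = -q := by rw [hq]; ring
    rw [this]
    rw [← hβγ]; ring
  have hcont : ContinuousOn F (Set.Ioi 0) := fun x hx =>
    (hFderiv x hx).continuousAt.continuousWithinAt
  have hFeq : ∀ x : ℝ, 0 < x → (g x = h x ↔ F x = 0) := by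
    intro x hx
    rw [hg, hh x hx, hF]
    constructor
    · intro he; simp only; rw [he]; ring
    · intro he; simp only at he; linarith
  have hFinf : F ηinf = 0 := by simp [hF]
  -- strict monotonicity on (0, m]
  have hmono : StrictMonoOn F (Set.Ioc 0 m) := by
    apply strictMonoOn_of_deriv_pos (convex_Ioc 0 m)
      (hcont.mono (fun x hx => hx.1))
    intro x hx
    rw [interior_Ioc] at hx
    rw [(hFderiv x hx.1).deriv]
    have := (hcmp x hx.1).mp hx.2
    linarith
  -- strict antitonicity on [m, ∞)
  have hanti : StrictAntiOn F (Set.Ici m) := by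
    apply strictAntiOn_of_deriv_neg (convex_Ici m)
      (hcont.mono (fun x hx => lt_of_lt_of_le hm0 hx))
    intro x hx
    rw [interior_Ici] at hx
    have hx0 : 0 < x := hm0.trans hx
    rw [(hFderiv x hx0).deriv]
    have := (hcmp' x hx0).mp hx
    linarith
  have hηm : ηinf < m := (hcmp ηinf hηinf).mpr (by rw [← hβγ]; exact hsaddle)
  have hFm : 0 < F m := by
    have := hmono (Set.mem_Ioc.mpr ⟨hηinf, hηm.le⟩) (Set.mem_Ioc.mpr ⟨hm0, le_rfl⟩) hηm
    rwa [hFinf] at this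
  -- a point b > m with F b < 0
  set b : ℝ := m + 1 + γ * ηinf ^ (-(ν + 2)) / s ^ 2 with hb
  have hbm : m < b := by
    have h1 : 0 < γ * ηinf ^ (-(ν + 2)) / s ^ 2 := by positivity
    rw [hb]; linarith
  have hb0 : 0 < b := hm0.trans hbm
  have hFb : F b < 0 := by
    have h1 : 0 < γ * b ^ (-(ν + 2)) := by positivity
    have h2 : s ^ 2 * (ηinf - b) = s ^ 2 * (ηinf - m - 1) - γ * ηinf ^ (-(ν + 2)) := by
      rw [hb]; field_simp; ring
    have h3 : s ^ 2 * (ηinf - m - 1) < 0 := by nlinarith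
    rw [hF]; simp only
    nlinarith
  -- intermediate value theorem on [m, b]
  obtain ⟨η₁, hη₁mem, hFη₁⟩ : ∃ x ∈ Set.Icc m b, F x = 0 := by
    have hsub : Set.Icc m b ⊆ Set.Ioi 0 := fun x hx => lt_of_lt_of_le hm0 hx.1
    have := intermediate_value_Icc' hbm.le (hcont.mono hsub)
    have h0 : (0:ℝ) ∈ Set.Icc (F b) (F m) := ⟨hFb.le, hFm.le⟩
    obtain ⟨x, hx, hfx⟩ := this h0
    exact ⟨x, hx, hfx⟩
  have hη₁m : m < η₁ := by
    rcases lt_or_eq_of_le hη₁mem.1 with h | h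
    · exact h
    · exfalso; rw [← h] at hFη₁; rw [hFη₁] at hFm; exact lt_irrefl 0 hFm
  have hη₁0 : 0 < η₁ := hm0.trans hη₁m
  have hη₁inf : ηinf < η₁ := hηm.trans hη₁m
  refine ⟨η₁, ⟨hη₁0, hη₁inf.ne', (hFeq η₁ hη₁0).mpr hFη₁, hη₁inf, ?_⟩, ?_⟩
  · rw [hβγ]; exact (hcmp' η₁ hη₁0).mp hη₁m
  · intro η hη0 hηne hgh
    have hFη : F η = 0 := (hFeq η hη0).mp hgh
    by_cases hle : η ≤ m
    · exfalso
      exact hηne (hmono.injOn (Set.mem_Ioc.mpr ⟨hη0, hle⟩)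
        (Set.mem_Ioc.mpr ⟨hηinf, hηm.le⟩) (by rw [hFη, hFinf]))
    · push_neg at hle
      exact hanti.injOn (Set.mem_Ici.mpr hle.le) (Set.mem_Ici.mpr hη₁m.le)
        (by rw [hFη, hFη₁])
end

section
/- Let M₁, M₂ be C¹ functions on an interval and W(z) = M₁'(z)M₂(z) - M₂'(z)M₁(z). If M₁, M₂ satisfy κ M_i'' = [γ - μ_i + s²/(μ_i - (ν+2)/η_s(z)^{ν+3})] M_i (i = 1,2) with a continuous positive function η_s, then W'(z) = ((μ₂-μ₁)/κ) M₁(z)M₂(z) Φ(z), where Φ(z) = 1 + s² η_s(z)^{2(ν+3)} / ([(ν+2) - μ₁ η_s(z)^{ν+3}][(ν+2) - μ₂ η_s(z)^{ν+3}]). -/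
/-!
The Wronskian of two solutions of `κ M'' = q M` satisfies `W' = M₁'' M₂ - M₂'' M₁ = (q₁ - q₂)/κ · M₁ M₂`,
so everything reduces to computing `q₁ - q₂`. With `h = η_s^{ν+3}` and `c = ν + 2` one has
`s²/(μ₁ - c/h) - s²/(μ₂ - c/h) = (μ₂ - μ₁) s² h² / ((c - μ₁ h)(c - μ₂ h))`.
-/

theorem hasDerivAt_wronskian {f g : ℝ → ℝ} {z : ℝ}
    (hf : DifferentiableAt ℝ f z) (hg : DifferentiableAt ℝ g z)
    (hf' : DifferentiableAt ℝ (deriv f) z) (hg' : DifferentiableAt ℝ (deriv g) z) :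
    HasDerivAt (fun x => deriv f x * g x - deriv g x * f x)
      (deriv (deriv f) z * g z - deriv (deriv g) z * f z) z := by
  refine ((hf'.hasDerivAt.mul hg.hasDerivAt).sub (hg'.hasDerivAt.mul hf.hasDerivAt)).congr_deriv ?_
  ring

theorem deriv_wronskian_of_eq_mul {f g : ℝ → ℝ} {κ p q z : ℝ}
    (hf : ContDiff ℝ 2 f) (hg : ContDiff ℝ 2 g) (hκ : κ ≠ 0)
    (hfe : κ * deriv (deriv f) z = p * f z) (hge : κ * deriv (deriv g) z = q * g z) :
    deriv (fun x => deriv f x * g x - deriv g x * f x) z = (p - q) / κ * (f z * g z) := by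
  have hf'' : deriv (deriv f) z = p * f z / κ := by rw [← hfe]; field_simp
  have hg'' : deriv (deriv g) z = q * g z / κ := by rw [← hge]; field_simp
  rw [(hasDerivAt_wronskian (hf.differentiable two_ne_zero z) (hg.differentiable two_ne_zero z)
    (hf.differentiable_deriv_two z) (hg.differentiable_deriv_two z)).deriv, hf'', hg'']
  ring

theorem potential_sub_potential {K : Type*} [Field K] {γ s c h μ₁ μ₂ : K}
    (hh : h ≠ 0) (h₁ : μ₁ * h ≠ c) (h₂ : μ₂ * h ≠ c) :
    (γ - μ₁ + s ^ 2 / (μ₁ - c / h)) - (γ - μ₂ + s ^ 2 / (μ₂ - c / h)) =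
      (μ₂ - μ₁) * (1 + s ^ 2 * h ^ 2 / ((c - μ₁ * h) * (c - μ₂ * h))) := by
  have d₁ : μ₁ * h - c ≠ 0 := sub_ne_zero.mpr h₁
  have d₂ : μ₂ * h - c ≠ 0 := sub_ne_zero.mpr h₂
  have e₁ : μ₁ - c / h = (μ₁ * h - c) / h := by field_simp
  have e₂ : μ₂ - c / h = (μ₂ * h - c) / h := by field_simp
  have key : s ^ 2 * h / (μ₁ * h - c) - s ^ 2 * h / (μ₂ * h - c) =
      (μ₂ - μ₁) * s ^ 2 * h ^ 2 / ((c - μ₁ * h) * (c - μ₂ * h)) := by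
    rw [div_sub_div _ _ d₁ d₂, div_eq_div_iff (mul_ne_zero d₁ d₂)
      (mul_ne_zero (sub_ne_zero.mpr h₁.symm) (sub_ne_zero.mpr h₂.symm))]
    ring
  rw [e₁, e₂, div_div_eq_mul_div, div_div_eq_mul_div]
  linear_combination key

theorem stmt_8_general (ν γ κ s : ℝ) (hκ : κ > 0)
    (ηs : ℝ → ℝ) (hηspos : ∀ z, ηs z > 0)
    (μ₁ μ₂ : ℝ)
    (hμ₁ : ∀ z, μ₁ * (ηs z) ^ (ν + 3) ≠ ν + 2)
    (hμ₂ : ∀ z, μ₂ * (ηs z) ^ (ν + 3) ≠ ν + 2)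
    (M₁ M₂ : ℝ → ℝ) (hM₁ : ContDiff ℝ 2 M₁) (hM₂ : ContDiff ℝ 2 M₂)
    (heq₁ : ∀ z, κ * deriv (deriv M₁) z =
      (γ - μ₁ + s ^ 2 / (μ₁ - (ν + 2) / (ηs z) ^ (ν + 3))) * M₁ z)
    (heq₂ : ∀ z, κ * deriv (deriv M₂) z =
      (γ - μ₂ + s ^ 2 / (μ₂ - (ν + 2) / (ηs z) ^ (ν + 3))) * M₂ z) :
    ∀ z, deriv (fun x => deriv M₁ x * M₂ x - deriv M₂ x * M₁ x) z =
      (μ₂ - μ₁) / κ * (M₁ z * M₂ z *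
        (1 + s ^ 2 * (ηs z) ^ (2 * (ν + 3)) /
          (((ν + 2) - μ₁ * (ηs z) ^ (ν + 3)) * ((ν + 2) - μ₂ * (ηs z) ^ (ν + 3))))) := by
  intro z
  have hsq : ηs z ^ (2 * (ν + 3)) = (ηs z ^ (ν + 3)) ^ 2 := by
    rw [mul_comm, Real.rpow_mul (hηspos z).le, Real.rpow_two]
  rw [deriv_wronskian_of_eq_mul hM₁ hM₂ hκ.ne' (heq₁ z) (heq₂ z),
    potential_sub_potential (Real.rpow_pos_of_pos (hηspos z) _).ne' (hμ₁ z) (hμ₂ z), hsq]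
  ring

/-- Derivative of the Wronskian of two solutions of the generalized
eigenvalue problem. -/
theorem stmt_8 (ν γ κ s : ℝ) (hν : ν > -1) (hκ : κ > 0)
    (ηs : ℝ → ℝ) (hηs : Continuous ηs) (hηspos : ∀ z, ηs z > 0)
    (μ₁ μ₂ : ℝ)
    (hμ₁ : ∀ z, μ₁ * (ηs z) ^ (ν + 3) ≠ ν + 2)
    (hμ₂ : ∀ z, μ₂ * (ηs z) ^ (ν + 3) ≠ ν + 2)
    (M₁ M₂ : ℝ → ℝ) (hM₁ : ContDiff ℝ 2 M₁) (hM₂ : ContDiff ℝ 2 M₂)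
    (heq₁ : ∀ z, κ * deriv (deriv M₁) z =
      (γ - μ₁ + s ^ 2 / (μ₁ - (ν + 2) / (ηs z) ^ (ν + 3))) * M₁ z)
    (heq₂ : ∀ z, κ * deriv (deriv M₂) z =
      (γ - μ₂ + s ^ 2 / (μ₂ - (ν + 2) / (ηs z) ^ (ν + 3))) * M₂ z) :
    ∀ z, deriv (fun x => deriv M₁ x * M₂ x - deriv M₂ x * M₁ x) z =
      (μ₂ - μ₁) / κ * (M₁ z * M₂ z *
        (1 + s ^ 2 * (ηs z) ^ (2 * (ν + 3)) /
          (((ν + 2) - μ₁ * (ηs z) ^ (ν + 3)) * ((ν + 2) - μ₂ * (ηs z) ^ (ν + 3))))) :=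
  stmt_8_general ν γ κ s hκ ηs hηspos μ₁ μ₂ hμ₁ hμ₂ M₁ M₂ hM₁ hM₂ heq₁ heq₂
end

section
/- Sturm-type comparison: let M₁, M₂ : (a,c] → ℝ be C¹ functions with W(z) = M₁'M₂ - M₂'M₁ satisfying W(z) - W(a⁺) = C ∫_a^z M₁ M₂ Φ dξ with C > 0 and Φ > 0, and suppose lim_{z→a⁺} M₁(z) = lim_{z→a⁺} M₂(z) = 0, M₂ > 0 on (a,c), and M₁ > 0 on some (a, a+ε). Then M₁ > 0 on (a,c). If moreover M₂(c) = 0 and M₂'(c) < 0, then M₁(c) > 0. -/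
open Set Filter Topology intervalIntegral MeasureTheory

private lemma deriv_nonpos_left_stmt10 (f : ℝ → ℝ) (b z₀ : ℝ) (hb : b < z₀)
    (hdiff : DifferentiableAt ℝ f z₀) (hf0 : f z₀ = 0)
    (hpos : ∀ z ∈ Ioo b z₀, 0 < f z) : deriv f z₀ ≤ 0 := by
  have h := hdiff.hasDerivAt
  rw [hasDerivAt_iff_tendsto_slope] at h
  have h' : Tendsto (slope f z₀) (𝓝[<] z₀) (𝓝 (deriv f z₀)) :=
    h.mono_left (nhdsWithin_mono _ fun x hx => ne_of_lt hx)
  refine le_of_tendsto h' ?_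
  filter_upwards [Ioo_mem_nhdsLT_of_mem ⟨hb, le_refl z₀⟩] with z hz
  rw [slope_def_field, hf0]
  exact div_nonpos_iff.mpr (Or.inl ⟨by linarith [hpos z hz], by linarith [hz.2]⟩)

private lemma integral_pos_aux_stmt10 (a c z₀ : ℝ) (M₁ M₂ Φ : ℝ → ℝ)
    (hΦpos : ∀ z, Φ z > 0)
    (hcont : ContinuousOn (fun ξ => M₁ ξ * M₂ ξ * Φ ξ) (Ioc a c))
    (hglim : Tendsto (fun ξ => M₁ ξ * M₂ ξ * Φ ξ) (𝓝[>] a) (𝓝 0))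
    (hz₀ : z₀ ∈ Ioc a c)
    (hpos : ∀ z ∈ Ioo a z₀, 0 < M₁ z * M₂ z)
    (hzero : M₁ z₀ * M₂ z₀ = 0) :
    0 < ∫ ξ in a..z₀, M₁ ξ * M₂ ξ * Φ ξ := by
  set g : ℝ → ℝ := fun ξ => M₁ ξ * M₂ ξ * Φ ξ with hg
  have h1 : ∀ᶠ x in 𝓝[>] a, ‖g x‖ < 1 := by
    have hn := hglim.norm
    rw [norm_zero] at hn
    exact hn.eventually (eventually_lt_nhds one_pos)
  obtain ⟨u, hu, husub⟩ := mem_nhdsGT_iff_exists_Ioc_subset.mp h1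
  set m := min u z₀ with hm
  have ham : a < m := lt_min hu hz₀.1
  have hmz : m ≤ z₀ := min_le_right _ _
  have hmc : m ≤ c := hmz.trans hz₀.2
  have hint1 : IntegrableOn g (Ioc a m) := by
    refine ⟨((hcont.mono (Ioc_subset_Ioc le_rfl hmc)).aestronglyMeasurable
      measurableSet_Ioc),
      HasFiniteIntegral.restrict_of_bounded (C := 1) measure_Ioc_lt_top ?_⟩
    refine (ae_restrict_iff' measurableSet_Ioc).mpr (ae_of_all _ fun x hx => ?_)
    exact (husub ⟨hx.1, hx.2.trans (min_le_left _ _)⟩).le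
  have hint2 : IntegrableOn g (Icc m z₀) :=
    (hcont.mono (fun x hx => ⟨ham.trans_le hx.1, hx.2.trans hz₀.2⟩)).integrableOn_Icc
  have hint : IntegrableOn g (Ioc a z₀) := by
    refine (hint1.union hint2).mono_set fun x hx => ?_
    rcases le_or_gt x m with h | h
    · exact Or.inl ⟨hx.1, h⟩
    · exact Or.inr ⟨h.le, hx.2⟩
  have hnonneg : ∀ x ∈ Ioc a z₀, 0 ≤ g x := by
    intro x hx
    rcases eq_or_lt_of_le hx.2 with h | h
    · simp only [hg, h, hzero, zero_mul, le_refl]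
    · exact (mul_pos (hpos x ⟨hx.1, h⟩) (hΦpos x)).le
  rw [intervalIntegral.integral_of_le hz₀.1.le]
  rw [setIntegral_pos_iff_support_of_nonneg_ae
    ((ae_restrict_iff' measurableSet_Ioc).mpr (ae_of_all _ hnonneg)) hint]
  refine lt_of_lt_of_le ?_ (measure_mono (fun x hx =>
    ⟨(mul_pos (hpos x hx) (hΦpos x)).ne', Ioo_subset_Ioc_self hx⟩))
  rw [Real.volume_Ioo]
  exact ENNReal.ofReal_pos.mpr (sub_pos.mpr hz₀.1)

/-- Sturm-type comparison lemma on the first interval. -/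
theorem stmt_10 (a c : ℝ) (hac : a < c) (M₁ M₂ Φ : ℝ → ℝ) (C : ℝ)
    (hC : C > 0) (hΦ : Continuous Φ) (hΦpos : ∀ z, Φ z > 0)
    (hM₁ : ∀ z ∈ Ioc a c, DifferentiableAt ℝ M₁ z)
    (hM₂ : ∀ z ∈ Ioc a c, DifferentiableAt ℝ M₂ z)
    (hW : ∀ z ∈ Ioc a c,
      deriv M₁ z * M₂ z - deriv M₂ z * M₁ z =
        C * ∫ ξ in a..z, M₁ ξ * M₂ ξ * Φ ξ)
    (hlim₁ : Tendsto M₁ (𝓝[>] a) (𝓝 0))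
    (hlim₂ : Tendsto M₂ (𝓝[>] a) (𝓝 0))
    (hM₂pos : ∀ z ∈ Ioo a c, M₂ z > 0)
    (hM₁pos : ∃ ε > 0, ∀ z ∈ Ioo a (a + ε), M₁ z > 0) :
    (∀ z ∈ Ioo a c, M₁ z > 0) ∧
    (M₂ c = 0 → deriv M₂ c < 0 → M₁ c > 0) := by
  have hgcont : ContinuousOn (fun ξ => M₁ ξ * M₂ ξ * Φ ξ) (Ioc a c) := fun x hx =>
    (((hM₁ x hx).continuousAt.mul (hM₂ x hx).continuousAt).mul
      hΦ.continuousAt).continuousWithinAt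
  have hglim : Tendsto (fun ξ => M₁ ξ * M₂ ξ * Φ ξ) (𝓝[>] a) (𝓝 0) := by
    have := (hlim₁.mul hlim₂).mul ((hΦ.tendsto a).mono_left nhdsWithin_le_nhds)
    simpa using this
  have key : ∀ z ∈ Ioo a c, M₁ z > 0 := by
    by_contra h
    push_neg at h
    obtain ⟨z₁, hz₁mem, hz₁⟩ := h
    obtain ⟨ε, hε, hεpos⟩ := hM₁pos
    have h01 : 0 < min ε (z₁ - a) := lt_min hε (sub_pos.mpr hz₁mem.1)
    set b := a + min ε (z₁ - a) / 2 with hbdef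
    have hab : a < b := by simp only [hbdef]; linarith
    have hbε : b < a + ε := by
      have := min_le_left ε (z₁ - a); simp only [hbdef]; linarith
    have hbz₁ : b < z₁ := by
      have := min_le_right ε (z₁ - a); simp only [hbdef]; linarith
    have hM₁b : 0 < M₁ b := hεpos b ⟨hab, hbε⟩
    set S := Icc b z₁ ∩ M₁ ⁻¹' Iic 0 with hSdef
    have hSne : S.Nonempty := ⟨z₁, ⟨hbz₁.le, le_rfl⟩, hz₁⟩
    have hSbdd : BddBelow S := ⟨b, fun z hz => hz.1.1⟩
    have hSclosed : IsClosed S := by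
      refine ContinuousOn.preimage_isClosed_of_isClosed (fun x hx =>
        ((hM₁ x ⟨hab.trans_le hx.1, hx.2.trans hz₁mem.2.le⟩).continuousAt).continuousWithinAt)
        isClosed_Icc isClosed_Iic
    set z₀ := sInf S with hz₀def
    have hz₀S : z₀ ∈ S := hSclosed.csInf_mem hSne hSbdd
    have hbz₀ : b < z₀ := by
      rcases lt_or_eq_of_le hz₀S.1.1 with h | h
      · exact h
      · exact absurd hz₀S.2 (by rw [← h]; exact not_le.mpr hM₁b)
    have hz₀c : z₀ < c := lt_of_le_of_lt hz₀S.1.2 hz₁mem.2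
    have hz₀mem : z₀ ∈ Ioc a c := ⟨hab.trans hbz₀, hz₀c.le⟩
    have hposIoo : ∀ z ∈ Ioo a z₀, 0 < M₁ z := by
      intro z hz
      rcases le_or_gt z b with hzb | hzb
      · exact hεpos z ⟨hz.1, lt_of_le_of_lt hzb hbε⟩
      · by_contra hneg
        push_neg at hneg
        have hzS : z ∈ S := ⟨⟨hzb.le, hz.2.le.trans hz₀S.1.2⟩, hneg⟩
        exact absurd (csInf_le hSbdd hzS) (not_le.mpr hz.2)
    have hM₁z₀ : M₁ z₀ = 0 := by
      refine le_antisymm hz₀S.2 ?_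
      have hc : Tendsto M₁ (𝓝[<] z₀) (𝓝 (M₁ z₀)) :=
        ((hM₁ z₀ hz₀mem).continuousAt.tendsto).mono_left nhdsWithin_le_nhds
      refine ge_of_tendsto hc ?_
      filter_upwards [Ioo_mem_nhdsLT_of_mem ⟨hbz₀, le_refl z₀⟩] with z hz
      exact (hposIoo z ⟨hab.trans hz.1, hz.2⟩).le
    have hintpos := integral_pos_aux_stmt10 a c z₀ M₁ M₂ Φ hΦpos hgcont hglim hz₀mem
      (fun z hz => mul_pos (hposIoo z hz) (hM₂pos z ⟨hz.1, hz.2.trans hz₀c⟩))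
      (by rw [hM₁z₀]; ring)
    have hWz₀ := hW z₀ hz₀mem
    have hderiv : deriv M₁ z₀ ≤ 0 := deriv_nonpos_left_stmt10 M₁ b z₀ hbz₀
      (hM₁ z₀ hz₀mem) hM₁z₀ (fun z hz => hposIoo z ⟨hab.trans hz.1, hz.2⟩)
    have hM₂z₀ : 0 < M₂ z₀ := hM₂pos z₀ ⟨hz₀mem.1, hz₀c⟩
    rw [hM₁z₀, mul_zero, sub_zero] at hWz₀
    have hle : deriv M₁ z₀ * M₂ z₀ ≤ 0 := mul_nonpos_of_nonpos_of_nonneg hderiv hM₂z₀.le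
    nlinarith
  refine ⟨key, fun hM₂c _ => ?_⟩
  have hcmem : c ∈ Ioc a c := ⟨hac, le_rfl⟩
  by_contra hno
  push_neg at hno
  have hM₁c : M₁ c = 0 := by
    refine le_antisymm hno ?_
    have hcc : Tendsto M₁ (𝓝[<] c) (𝓝 (M₁ c)) :=
      ((hM₁ c hcmem).continuousAt.tendsto).mono_left nhdsWithin_le_nhds
    refine ge_of_tendsto hcc ?_
    filter_upwards [Ioo_mem_nhdsLT_of_mem ⟨hac, le_refl c⟩] with z hz
    exact (key z hz).le
  have hintpos := integral_pos_aux_stmt10 a c c M₁ M₂ Φ hΦpos hgcont hglim hcmem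
    (fun z hz => mul_pos (key z hz) (hM₂pos z hz)) (by rw [hM₁c]; ring)
  have hWc := hW c hcmem
  rw [hM₂c, hM₁c, mul_zero, mul_zero, sub_zero] at hWc
  nlinarith
end

section
/- Sturm-type comparison (second interval): under the integral Wronskian identity W(z) = W(f) + C∫_f^z M₁M₂Φ dξ with C > 0, Φ > 0, suppose M₁ > 0 on (a,c], M₂(c)=0, M₂'(c)<0, M₂<0 on (c,e), and lim_{z→e⁻} M₁(z) = lim_{z→e⁻} M₂(z) = 0 with lim_{z→e⁻} W(z) finite equal to 0. Then M₁ > 0 on (c,e). -/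
open Set Filter Topology intervalIntegral

/-! The Wronskian `W = M₁' M₂ - M₂' M₁` satisfies `W' = ρ M₁ M₂` with `ρ = C Φ > 0`, so on `(c, e)`,
where `M₂ < 0`, it increases strictly wherever `M₁ < 0`. If `M₁` were negative somewhere, let `p` be
the last zero of `M₁` before that point: `W p = M₁' p * M₂ p ≥ 0`, and `W` increases strictly up to
the next zero `q` of `M₁`, where `W q = M₁' q * M₂ q ≤ 0`, or, if there is none, up to `e`, where
`W → 0`; both are absurd. Hence `M₁ ≥ 0`, and at a zero `d` of `M₁` also `M₁' d = 0` and `W d = 0`.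
But `r = M₁ / M₂ ≤ 0` and `W ≥ 0` solve the linear system `r' = W / M₂²`, `W' = ρ M₂² r`, and a
Gronwall estimate for `W - r` forces `r = 0` on `(c, d]`, contradicting `M₁ c > 0`. -/

theorem exists_zero_neg_on_Ioc {f : ℝ → ℝ} {x y : ℝ} (hxy : x ≤ y)
    (hf : ContinuousOn f (Icc x y)) (hx : 0 ≤ f x) (hy : f y < 0) :
    ∃ p ∈ Ico x y, f p = 0 ∧ ∀ t ∈ Ioc p y, f t < 0 := by
  set S := Icc x y ∩ f ⁻¹' Ici 0
  have hS : IsCompact S :=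
    isCompact_Icc.of_isClosed_subset (hf.preimage_isClosed_of_isClosed isClosed_Icc isClosed_Ici)
      inter_subset_left
  obtain ⟨⟨hxp, hpy⟩, hp⟩ : sSup S ∈ S := hS.sSup_mem ⟨x, ⟨le_rfl, hxy⟩, hx⟩
  have hneg : ∀ t ∈ Ioc (sSup S) y, f t < 0 := fun t ht ↦ not_le.1 fun h ↦
    ht.1.not_ge (le_csSup hS.bddAbove ⟨⟨hxp.trans ht.1.le, ht.2⟩, h⟩)
  have hpy' : sSup S < y := hpy.lt_of_ne (by rintro h; rw [h] at hp; exact (not_le.2 hy) hp)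
  refine ⟨sSup S, ⟨hxp, hpy'⟩, le_antisymm ?_ hp, hneg⟩
  have hlim : Tendsto f (𝓝[>] sSup S) (𝓝 (f (sSup S))) := by
    rw [← nhdsWithin_Ioc_eq_nhdsGT hpy']
    exact ((hf _ ⟨hxp, hpy⟩).mono (Ioc_subset_Icc_self.trans (Icc_subset_Icc_left hxp))).tendsto
  refine le_of_tendsto hlim ?_
  filter_upwards [Ioo_mem_nhdsGT hpy'] with t ht using (hneg t (Ioo_subset_Ioc_self ht)).le

theorem exists_zero_neg_on_Ico {f : ℝ → ℝ} {x y : ℝ} (hxy : x ≤ y)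
    (hf : ContinuousOn f (Icc x y)) (hx : f x < 0) (hy : 0 ≤ f y) :
    ∃ q ∈ Ioc x y, f q = 0 ∧ ∀ t ∈ Ico x q, f t < 0 := by
  have hf' : ContinuousOn (fun t ↦ f (-t)) (Icc (-y) (-x)) :=
    hf.comp continuousOn_neg fun t ht ↦ ⟨le_neg.1 ht.2, neg_le.1 ht.1⟩
  obtain ⟨p, hp, hp0, hneg⟩ :=
    exists_zero_neg_on_Ioc (neg_le_neg hxy) hf' (by simpa using hy) (by simpa using hx)
  refine ⟨-p, ⟨lt_neg.1 hp.2, neg_le.1 hp.1⟩, hp0, fun t ht ↦ ?_⟩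
  simpa using hneg (-t) ⟨lt_neg.1 ht.2, neg_le_neg ht.1⟩

theorem deriv_nonpos_of_le_right {f : ℝ → ℝ} {p q : ℝ} (hf : DifferentiableAt ℝ f p)
    (hpq : p < q) (hle : ∀ t ∈ Ioo p q, f t ≤ f p) : deriv f p ≤ 0 := by
  refine le_of_tendsto (hf.hasDerivAt.tendsto_slope.mono_left (nhdsGT_le_nhdsNE p)) ?_
  filter_upwards [Ioo_mem_nhdsGT hpq] with t ht
  rw [slope_def_field]
  exact div_nonpos_of_nonpos_of_nonneg (sub_nonpos.2 (hle t ht)) (sub_nonneg.2 ht.1.le)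

theorem deriv_nonneg_of_le_left {f : ℝ → ℝ} {p q : ℝ} (hf : DifferentiableAt ℝ f q)
    (hpq : p < q) (hle : ∀ t ∈ Ioo p q, f t ≤ f q) : 0 ≤ deriv f q := by
  refine ge_of_tendsto (hf.hasDerivAt.tendsto_slope.mono_left (nhdsLT_le_nhdsNE q)) ?_
  filter_upwards [Ioo_mem_nhdsLT hpq] with t ht
  rw [slope_def_field]
  exact div_nonneg_of_nonpos (sub_nonpos.2 (hle t ht)) (sub_nonpos.2 ht.2.le)

theorem hasDerivAt_of_sub_eq_integral {F g : ℝ → ℝ} {C : ℝ} {s : Set ℝ} (hs : IsOpen s)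
    (hg : ContinuousOn g s) (hF : ∀ x ∈ s, ∀ y ∈ s, F y - F x = C * ∫ ξ in x..y, g ξ)
    {x : ℝ} (hx : x ∈ s) : HasDerivAt F (C * g x) x := by
  have hint : HasDerivAt (fun y ↦ F x + C * ∫ ξ in x..y, g ξ) (C * g x) x :=
    ((integral_hasDerivAt_right IntervalIntegrable.refl (hg.stronglyMeasurableAtFilter hs x hx)
      (hg.continuousAt (hs.mem_nhds hx))).const_mul C).const_add _
  refine hint.congr_of_eventuallyEq ?_
  filter_upwards [hs.mem_nhds hx] with y hy
  rw [← hF x hx y hy]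
  ring

theorem nonpos_of_hasDerivAt_ge_neg_mul {u u' : ℝ → ℝ} {L s t : ℝ} (hst : s ≤ t)
    (hu : ContinuousOn u (Icc s t)) (hu' : ∀ x ∈ Ioo s t, HasDerivAt u (u' x) x)
    (hbound : ∀ x ∈ Ioo s t, -(L * u x) ≤ u' x) (ht : u t ≤ 0) : u s ≤ 0 := by
  have hmono : MonotoneOn (fun x ↦ u x * Real.exp (L * x)) (Icc s t) := by
    refine monotoneOn_of_hasDerivWithinAt_nonneg (f' := fun x ↦ (u' x + L * u x) * Real.exp (L * x))
      (convex_Icc s t) (hu.mul (by fun_prop)) (fun x hx ↦ ?_) (fun x hx ↦ ?_) <;>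
      rw [interior_Icc] at hx
    · have hexp : HasDerivAt (fun y ↦ Real.exp (L * y)) (Real.exp (L * x) * L) x := by
        simpa using ((hasDerivAt_id x).const_mul L).exp
      exact (((hu' x hx).mul hexp).congr_deriv (by ring)).hasDerivWithinAt
    · exact mul_nonneg (by linarith [hbound x hx]) (Real.exp_pos _).le
  have hus : u s * Real.exp (L * s) ≤ 0 := (hmono ⟨le_rfl, hst⟩ ⟨hst, le_rfl⟩ hst).trans
    (mul_nonpos_of_nonpos_of_nonneg ht (Real.exp_pos _).le)
  exact nonpos_of_mul_nonpos_left hus (Real.exp_pos _)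

theorem eq_zero_of_hasDerivAt_of_nonpos_of_nonneg {r w α β : ℝ → ℝ} {s t : ℝ} (hst : s ≤ t)
    (hα : ContinuousOn α (Icc s t)) (hβ : ContinuousOn β (Icc s t))
    (hr : ∀ x ∈ Icc s t, HasDerivAt r (α x * w x) x)
    (hw : ∀ x ∈ Icc s t, HasDerivAt w (β x * r x) x)
    (hr0 : ∀ x ∈ Icc s t, r x ≤ 0) (hw0 : ∀ x ∈ Icc s t, 0 ≤ w x)
    (hrt : r t = 0) (hwt : w t = 0) : r s = 0 := by
  obtain ⟨A, hA⟩ := isCompact_Icc.exists_bound_of_continuousOn hα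
  obtain ⟨B, hB⟩ := isCompact_Icc.exists_bound_of_continuousOn hβ
  have hu : w s - r s ≤ 0 := by
    refine nonpos_of_hasDerivAt_ge_neg_mul (u := fun x ↦ w x - r x) (L := max A B) hst
      (fun x hx ↦ ((hw x hx).sub (hr x hx)).continuousAt.continuousWithinAt)
      (fun x hx ↦ (hw x (Ioo_subset_Icc_self hx)).sub (hr x (Ioo_subset_Icc_self hx)))
      (fun x hx ↦ ?_) (by simp [hrt, hwt])
    have hx' := Ioo_subset_Icc_self hx
    have hαx : α x ≤ max A B := (le_abs_self _).trans ((hA x hx').trans (le_max_left _ _))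
    have hβx : β x ≤ max A B := (le_abs_self _).trans ((hB x hx').trans (le_max_right _ _))
    have := mul_le_mul_of_nonneg_right hαx (hw0 x hx')
    have := mul_le_mul_of_nonpos_right hβx (hr0 x hx')
    linarith
  exact le_antisymm (hr0 s ⟨le_rfl, hst⟩) (by linarith [hw0 s ⟨le_rfl, hst⟩])

noncomputable def wronskian (f g : ℝ → ℝ) (x : ℝ) : ℝ := deriv f x * g x - deriv g x * f x

section

variable {M₁ M₂ ρ : ℝ → ℝ} {c e : ℝ}

theorem nonneg_of_hasDerivAt_wronskian (hM₁ : ∀ z ∈ Ico c e, DifferentiableAt ℝ M₁ z)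
    (hρ : ∀ z ∈ Ioo c e, 0 < ρ z)
    (hW : ∀ z ∈ Ioo c e, HasDerivAt (wronskian M₁ M₂) (ρ z * (M₁ z * M₂ z)) z)
    (hM₁c : 0 < M₁ c) (hM₂neg : ∀ z ∈ Ioo c e, M₂ z < 0)
    (hlimW : Tendsto (wronskian M₁ M₂) (𝓝[<] e) (𝓝 0)) :
    ∀ z ∈ Ioo c e, 0 ≤ M₁ z := by
  intro z₀ hz₀
  by_contra! hz₀neg
  have hM₁cont : ContinuousOn M₁ (Ico c e) :=
    fun x hx ↦ (hM₁ x hx).continuousAt.continuousWithinAt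
  obtain ⟨p, hp, hMp, hneg_p⟩ := exists_zero_neg_on_Ioc hz₀.1.le
    (hM₁cont.mono (Icc_subset_Ico_right hz₀.2)) hM₁c.le hz₀neg
  have hcp : c < p := hp.1.lt_of_ne (by rintro rfl; linarith)
  have hpe : p ∈ Ioo c e := ⟨hcp, hp.2.trans hz₀.2⟩
  have hWp : 0 ≤ wronskian M₁ M₂ p := by
    have : deriv M₁ p ≤ 0 := deriv_nonpos_of_le_right (hM₁ p (Ioo_subset_Ico_self hpe)) hp.2
      fun t ht ↦ hMp ▸ (hneg_p t (Ioo_subset_Ioc_self ht)).le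
    simpa [wronskian, hMp] using mul_nonneg_of_nonpos_of_nonpos this (hM₂neg p hpe).le
  have hWmono : ∀ q ∈ Ioo p e, (∀ x ∈ Ioo p q, M₁ x < 0) →
      StrictMonoOn (wronskian M₁ M₂) (Icc p q) := by
    intro q hq hneg
    have hsub : Icc p q ⊆ Ioo c e := Icc_subset_Ioo hcp hq.2
    refine strictMonoOn_of_hasDerivWithinAt_pos (f' := fun x ↦ ρ x * (M₁ x * M₂ x)) (convex_Icc p q)
      (fun x hx ↦ (hW x (hsub hx)).continuousAt.continuousWithinAt) (fun x hx ↦ ?_)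
      (fun x hx ↦ ?_) <;> rw [interior_Icc] at hx <;> have hx' := hsub (Ioo_subset_Icc_self hx)
    · exact (hW x hx').hasDerivWithinAt
    · exact mul_pos (hρ x hx') (mul_pos_of_neg_of_neg (hneg x hx) (hM₂neg x hx'))
  by_cases hzero : ∃ x ∈ Ioo z₀ e, 0 ≤ M₁ x
  · obtain ⟨x, hx, hMx⟩ := hzero
    obtain ⟨q, hq, hMq, hneg_q⟩ := exists_zero_neg_on_Ico hx.1.le
      (hM₁cont.mono (Icc_subset_Ico hz₀.1.le hx.2)) hz₀neg hMx
    have hqe : q ∈ Ioo p e := ⟨hp.2.trans hq.1, hq.2.trans_lt hx.2⟩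
    have hWq : wronskian M₁ M₂ q ≤ 0 := by
      have : 0 ≤ deriv M₁ q := deriv_nonneg_of_le_left (hM₁ q ⟨hcp.le.trans hqe.1.le, hqe.2⟩)
        hq.1 fun t ht ↦ hMq ▸ (hneg_q t (Ioo_subset_Ico_self ht)).le
      simpa [wronskian, hMq] using
        mul_nonpos_of_nonneg_of_nonpos this (hM₂neg q ⟨hcp.trans hqe.1, hqe.2⟩).le
    have hneg : ∀ t ∈ Ioo p q, M₁ t < 0 := fun t ht ↦ (le_or_gt t z₀).elim
      (fun h ↦ hneg_p t ⟨ht.1, h⟩) (fun h ↦ hneg_q t ⟨h.le, ht.2⟩)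
    have := hWmono q hqe hneg ⟨le_rfl, hqe.1.le⟩ ⟨hqe.1.le, le_rfl⟩ hqe.1
    linarith
  · push Not at hzero
    have hneg : ∀ t ∈ Ioo p e, M₁ t < 0 := fun t ht ↦ (le_or_gt t z₀).elim
      (fun h ↦ hneg_p t ⟨ht.1, h⟩) (fun h ↦ hzero t ⟨h, ht.2⟩)
    have hWz₀ : wronskian M₁ M₂ z₀ ≤ 0 := by
      refine ge_of_tendsto hlimW ?_
      filter_upwards [Ioo_mem_nhdsLT hz₀.2] with z hz
      exact (hWmono z ⟨hp.2.trans hz.1, hz.2⟩ fun t ht ↦ hneg t ⟨ht.1, ht.2.trans hz.2⟩).monotoneOn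
        ⟨hp.2.le, hz.1.le⟩ ⟨hp.2.le.trans hz.1.le, le_rfl⟩ hz.1.le
    have := hWmono z₀ ⟨hp.2, hz₀.2⟩ (fun t ht ↦ hneg t ⟨ht.1, ht.2.trans hz₀.2⟩)
      ⟨le_rfl, hp.2.le⟩ ⟨hp.2.le, le_rfl⟩ hp.2
    linarith

theorem eq_zero_of_hasDerivAt_wronskian (hM₁ : ∀ z ∈ Ioo c e, DifferentiableAt ℝ M₁ z)
    (hM₂ : ∀ z ∈ Ioo c e, DifferentiableAt ℝ M₂ z) (hρ : ContinuousOn ρ (Ioo c e))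
    (hρ0 : ∀ z ∈ Ioo c e, 0 ≤ ρ z)
    (hW : ∀ z ∈ Ioo c e, HasDerivAt (wronskian M₁ M₂) (ρ z * (M₁ z * M₂ z)) z)
    (hM₂neg : ∀ z ∈ Ioo c e, M₂ z < 0) (hM₁nonneg : ∀ z ∈ Ioo c e, 0 ≤ M₁ z)
    {d : ℝ} (hd : d ∈ Ioo c e) (hd0 : M₁ d = 0) {s : ℝ} (hs : s ∈ Ioc c d) : M₁ s = 0 := by
  have hWd : wronskian M₁ M₂ d = 0 := by
    have hmin : IsLocalMin M₁ d := by
      filter_upwards [isOpen_Ioo.mem_nhds hd] with x hx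
      exact hd0 ▸ hM₁nonneg x hx
    simp [wronskian, hd0, hmin.deriv_eq_zero]
  have hanti : AntitoneOn (wronskian M₁ M₂) (Ioo c e) := by
    refine antitoneOn_of_hasDerivWithinAt_nonpos (f' := fun x ↦ ρ x * (M₁ x * M₂ x))
      (convex_Ioo c e) (fun x hx ↦ (hW x hx).continuousAt.continuousWithinAt) (fun x hx ↦ ?_)
      (fun x hx ↦ ?_) <;> rw [interior_Ioo] at hx
    · exact (hW x hx).hasDerivWithinAt
    · exact mul_nonpos_of_nonneg_of_nonpos (hρ0 x hx)
        (mul_nonpos_of_nonneg_of_nonpos (hM₁nonneg x hx) (hM₂neg x hx).le)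
  have hsub : Icc s d ⊆ Ioo c e := Icc_subset_Ioo hs.1 hd.2
  have hM₂cont : ContinuousOn M₂ (Icc s d) :=
    fun x hx ↦ (hM₂ x (hsub hx)).continuousAt.continuousWithinAt
  have hr := eq_zero_of_hasDerivAt_of_nonpos_of_nonneg (r := fun x ↦ M₁ x / M₂ x)
    (w := wronskian M₁ M₂) (α := fun x ↦ (M₂ x ^ 2)⁻¹) (β := fun x ↦ ρ x * M₂ x ^ 2) hs.2
    ?_ ?_ ?_ ?_ ?_ ?_ (by simp [hd0]) hWd
  · simpa [(hM₂neg s (hsub ⟨le_rfl, hs.2⟩)).ne] using hr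
  · exact (hM₂cont.pow 2).inv₀ fun x hx ↦ pow_ne_zero 2 (hM₂neg x (hsub hx)).ne
  · exact (hρ.mono hsub).mul (hM₂cont.pow 2)
  · exact fun x hx ↦ ((hM₁ x (hsub hx)).hasDerivAt.div (hM₂ x (hsub hx)).hasDerivAt
      (hM₂neg x (hsub hx)).ne).congr_deriv (by unfold wronskian; ring)
  · exact fun x hx ↦ (hW x (hsub hx)).congr_deriv (by field_simp [(hM₂neg x (hsub hx)).ne])
  · exact fun x hx ↦ div_nonpos_of_nonneg_of_nonpos (hM₁nonneg x (hsub hx)) (hM₂neg x (hsub hx)).le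
  · exact fun x hx ↦ hWd ▸ hanti (hsub hx) hd hx.2

theorem pos_of_hasDerivAt_wronskian
    (hM₁ : ∀ z ∈ Ico c e, DifferentiableAt ℝ M₁ z) (hM₂ : ∀ z ∈ Ioo c e, DifferentiableAt ℝ M₂ z)
    (hρ : ContinuousOn ρ (Ioo c e)) (hρpos : ∀ z ∈ Ioo c e, 0 < ρ z)
    (hW : ∀ z ∈ Ioo c e, HasDerivAt (wronskian M₁ M₂) (ρ z * (M₁ z * M₂ z)) z)
    (hM₁c : 0 < M₁ c) (hM₂neg : ∀ z ∈ Ioo c e, M₂ z < 0)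
    (hlimW : Tendsto (wronskian M₁ M₂) (𝓝[<] e) (𝓝 0)) :
    ∀ z ∈ Ioo c e, 0 < M₁ z := by
  have hnonneg := nonneg_of_hasDerivAt_wronskian hM₁ hρpos hW hM₁c hM₂neg hlimW
  intro z hz
  refine (hnonneg z hz).lt_of_ne fun hz0 ↦ hM₁c.ne' ?_
  have hvanish : ∀ s ∈ Ioc c z, M₁ s = 0 := fun s hs ↦
    eq_zero_of_hasDerivAt_wronskian (fun x hx ↦ hM₁ x (Ioo_subset_Ico_self hx)) hM₂ hρ
      (fun x hx ↦ (hρpos x hx).le) hW hM₂neg hnonneg hz hz0.symm hs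
  have hlim : Tendsto M₁ (𝓝[>] c) (𝓝 (M₁ c)) :=
    (hM₁ c ⟨le_rfl, hz.1.trans hz.2⟩).continuousAt.tendsto.mono_left nhdsWithin_le_nhds
  exact tendsto_nhds_unique (hlim.congr' (eventually_of_mem (Ioc_mem_nhdsGT hz.1) hvanish))
    tendsto_const_nhds

end

theorem stmt_11_general (a c e : ℝ) (hac : a < c)
    (M₁ M₂ Φ : ℝ → ℝ) (C : ℝ) (hC : C > 0)
    (hΦ : Continuous Φ) (hΦpos : ∀ z, Φ z > 0)
    (hM₁ : ∀ z ∈ Ioo a e, DifferentiableAt ℝ M₁ z)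
    (hM₂ : ∀ z ∈ Ioo a e, DifferentiableAt ℝ M₂ z)
    (hW : ∀ z₁ ∈ Ioo a e, ∀ z₂ ∈ Ioo a e,
      (deriv M₁ z₂ * M₂ z₂ - deriv M₂ z₂ * M₁ z₂)
        - (deriv M₁ z₁ * M₂ z₁ - deriv M₂ z₁ * M₁ z₁) =
      C * ∫ ξ in z₁..z₂, M₁ ξ * M₂ ξ * Φ ξ)
    (hM₁pos : ∀ z ∈ Ioc a c, M₁ z > 0)
    (hM₂neg : ∀ z ∈ Ioo c e, M₂ z < 0)
    (hlimW : Tendsto (fun z => deriv M₁ z * M₂ z - deriv M₂ z * M₁ z)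
      (𝓝[<] e) (𝓝 0)) :
    ∀ z ∈ Ioo c e, M₁ z > 0 := by
  have hsub : Ico c e ⊆ Ioo a e := fun z hz ↦ ⟨hac.trans_le hz.1, hz.2⟩
  have hg : ContinuousOn (fun ξ ↦ M₁ ξ * M₂ ξ * Φ ξ) (Ioo a e) := fun z hz ↦
    (((hM₁ z hz).continuousAt.mul (hM₂ z hz).continuousAt).mul hΦ.continuousAt).continuousWithinAt
  have hW' : ∀ z ∈ Ioo c e, HasDerivAt (wronskian M₁ M₂) (C * Φ z * (M₁ z * M₂ z)) z :=
    fun z hz ↦ (hasDerivAt_of_sub_eq_integral (F := wronskian M₁ M₂) isOpen_Ioo hg hW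
      (hsub (Ioo_subset_Ico_self hz))).congr_deriv (by ring)
  exact pos_of_hasDerivAt_wronskian (ρ := fun z ↦ C * Φ z) (fun z hz ↦ hM₁ z (hsub hz))
    (fun z hz ↦ hM₂ z (hsub (Ioo_subset_Ico_self hz))) (by fun_prop)
    (fun z _ ↦ mul_pos hC (hΦpos z)) hW' (hM₁pos c ⟨hac, le_rfl⟩) hM₂neg hlimW

/-- Sturm-type comparison lemma on the second interval. -/
theorem stmt_11 (a c e : ℝ) (hac : a < c) (hce : c < e)
    (M₁ M₂ Φ : ℝ → ℝ) (C : ℝ) (hC : C > 0)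
    (hΦ : Continuous Φ) (hΦpos : ∀ z, Φ z > 0)
    (hM₁ : ∀ z ∈ Ioo a e, DifferentiableAt ℝ M₁ z)
    (hM₂ : ∀ z ∈ Ioo a e, DifferentiableAt ℝ M₂ z)
    (hW : ∀ z₁ ∈ Ioo a e, ∀ z₂ ∈ Ioo a e,
      (deriv M₁ z₂ * M₂ z₂ - deriv M₂ z₂ * M₁ z₂)
        - (deriv M₁ z₁ * M₂ z₁ - deriv M₂ z₁ * M₁ z₁) =
      C * ∫ ξ in z₁..z₂, M₁ ξ * M₂ ξ * Φ ξ)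
    (hM₁pos : ∀ z ∈ Ioc a c, M₁ z > 0)
    (hM₂c : M₂ c = 0) (hM₂'c : deriv M₂ c < 0)
    (hM₂neg : ∀ z ∈ Ioo c e, M₂ z < 0)
    (hlim₁ : Tendsto M₁ (𝓝[<] e) (𝓝 0))
    (hlim₂ : Tendsto M₂ (𝓝[<] e) (𝓝 0))
    (hlimW : Tendsto (fun z => deriv M₁ z * M₂ z - deriv M₂ z * M₁ z)
      (𝓝[<] e) (𝓝 0)) :
    ∀ z ∈ Ioo c e, M₁ z > 0 :=
  stmt_11_general a c e hac M₁ M₂ Φ C hC hΦ hΦpos hM₁ hM₂ hW hM₁pos hM₂neg hlimW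
end

section
/- The system w_t = -∂_x(η^{-(ν+2)}), η_t = (γ - κ∂_x²)w_x is invariant under the transformations t̄ = e^μ t, x̄ = x, w̄ = e^{-((ν+1)/(ν+3))μ} w + A, η̄ = e^{(2/(ν+3))μ} η, for arbitrary μ, A ∈ ℝ. -/
/-- Partial derivative in the first (time) variable. -/
noncomputable def pdt (f : ℝ → ℝ → ℝ) (t x : ℝ) : ℝ := deriv (fun τ => f τ x) t

/-- Partial derivative in the second (space) variable. -/
noncomputable def pdx (f : ℝ → ℝ → ℝ) (t x : ℝ) : ℝ := deriv (fun y => f t y) x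

lemma deriv_scale (f : ℝ → ℝ) (hf : Differentiable ℝ f) (c t : ℝ) :
    deriv (fun τ => f (c * τ)) t = c * deriv f (c * t) := by
  have h1 : HasDerivAt (fun τ => c * τ) c t := by
    simpa using (hasDerivAt_id t).const_mul c
  have h := ((hf (c * t)).hasDerivAt).comp t h1
  have h2 := h.deriv
  simp only [Function.comp_def] at h2
  rw [h2]; ring

/-- Invariance of the system `w_t = -∂_x η^{-(ν+2)}`, `η_t = (γ-κ∂_x²)w_x`
under the scaling–translation group. -/
theorem stmt_15 (ν γ κ μ A : ℝ) (hν : ν > -1) (hγ : γ > 0) (hκ : κ > 0)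
    (w η : ℝ → ℝ → ℝ)
    (hwsm : ContDiff ℝ (⊤ : ℕ∞) (Function.uncurry w))
    (hηsm : ContDiff ℝ (⊤ : ℕ∞) (Function.uncurry η))
    (hηpos : ∀ t x, η t x > 0)
    (heq1 : ∀ t x, pdt w t x = -pdx (fun a b => (η a b) ^ (-(ν + 2))) t x)
    (heq2 : ∀ t x, pdt η t x = γ * pdx w t x - κ * pdx (pdx (pdx w)) t x)
    (wbar ηbar : ℝ → ℝ → ℝ)
    (hwbar : ∀ t x, wbar t x =
      Real.exp (-((ν + 1) / (ν + 3)) * μ) * w (Real.exp (-μ) * t) x + A)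
    (hηbar : ∀ t x, ηbar t x = Real.exp ((2 / (ν + 3)) * μ) * η (Real.exp (-μ) * t) x) :
    (∀ t x, pdt wbar t x = -pdx (fun a b => (ηbar a b) ^ (-(ν + 2))) t x) ∧
    (∀ t x, pdt ηbar t x = γ * pdx wbar t x - κ * pdx (pdx (pdx wbar)) t x) := by
  set em := Real.exp (-μ) with hem
  set c1 := Real.exp (-((ν + 1) / (ν + 3)) * μ) with hc1
  set c2 := Real.exp ((2 / (ν + 3)) * μ) with hc2
  have hν3 : ν + 3 ≠ 0 := by linarith
  have key_c : c2 * em = c1 := by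
    rw [hc1, hc2, hem, ← Real.exp_add]; congr 1; field_simp; ring
  have key_r : c2 ^ (-(ν + 2)) = c1 * em := by
    rw [hc2, ← Real.exp_mul, hc1, hem, ← Real.exp_add]; congr 1; field_simp; ring
  -- differentiability helpers
  have hw_t : ∀ x, ContDiff ℝ (⊤ : ℕ∞) (fun s => w s x) := fun x =>
    hwsm.comp (contDiff_id.prodMk contDiff_const)
  have hη_t : ∀ x, ContDiff ℝ (⊤ : ℕ∞) (fun s => η s x) := fun x =>
    hηsm.comp (contDiff_id.prodMk contDiff_const)
  have hw_x : ∀ t, ContDiff ℝ (⊤ : ℕ∞) (fun y => w t y) := fun t =>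
    hwsm.comp (contDiff_const.prodMk contDiff_id)
  have hη_x : ∀ t, ContDiff ℝ (⊤ : ℕ∞) (fun y => η t y) := fun t =>
    hηsm.comp (contDiff_const.prodMk contDiff_id)
  -- pdt wbar
  have pdt_wbar : ∀ t x, pdt wbar t x = c1 * em * pdt w (em * t) x := by
    intro t x
    have hfun : (fun τ => wbar τ x) = fun τ => c1 * w (em * τ) x + A := by
      funext τ; rw [hwbar]
    have hd : Differentiable ℝ (fun τ => w (em * τ) x) :=
      ((hw_t x).differentiable (by simp)).comp (differentiable_id.const_mul em)
    rw [pdt, hfun, deriv_add_const, deriv_const_mul _ (hd t),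
      deriv_scale _ ((hw_t x).differentiable (by simp))]
    rw [pdt]; ring
  -- pdt ηbar
  have pdt_ηbar : ∀ t x, pdt ηbar t x = c2 * em * pdt η (em * t) x := by
    intro t x
    have hfun : (fun τ => ηbar τ x) = fun τ => c2 * η (em * τ) x := by
      funext τ; rw [hηbar]
    have hd : Differentiable ℝ (fun τ => η (em * τ) x) :=
      ((hη_t x).differentiable (by simp)).comp (differentiable_id.const_mul em)
    rw [pdt, hfun, deriv_const_mul _ (hd t),
      deriv_scale _ ((hη_t x).differentiable (by simp))]
    rw [pdt]; ring
  constructor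
  · intro t x
    have hηfun : (fun y => ηbar t y ^ (-(ν + 2)))
        = fun y => c2 ^ (-(ν + 2)) * (η (em * t) y) ^ (-(ν + 2)) := by
      funext y
      rw [hηbar, Real.mul_rpow (le_of_lt (Real.exp_pos _)) (le_of_lt (hηpos _ _))]
    have hdη : DifferentiableAt ℝ (fun y => (η (em * t) y) ^ (-(ν + 2))) x :=
      ((hη_x (em * t)).differentiable (by simp) x).rpow_const
        (Or.inl (ne_of_gt (hηpos _ _)))
    have hrhs : pdx (fun a b => (ηbar a b) ^ (-(ν + 2))) t x
        = c2 ^ (-(ν + 2)) * pdx (fun a b => (η a b) ^ (-(ν + 2))) (em * t) x := by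
      show deriv (fun y => ηbar t y ^ (-(ν + 2))) x = _
      rw [hηfun, deriv_const_mul _ hdη]; rfl
    rw [pdt_wbar, hrhs, key_r, heq1 (em * t) x]; ring
  · intro t x
    -- spatial derivatives of wbar
    have hw_x' : ContDiff ℝ (⊤ : ℕ∞) (fun y => w (em * t) y) :=
      (hw_x (em * t)).of_le (by simp)
    have hdw : Differentiable ℝ (deriv (fun y => w (em * t) y)) :=
      ((contDiff_infty_iff_deriv.mp
        ((contDiff_infty_iff_deriv.mp hw_x').2)).1)
    have pdx_wbar : ∀ y, pdx wbar t y = c1 * deriv (fun z => w (em * t) z) y := by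
      intro y
      have hfun : (fun z => wbar t z) = fun z => c1 * w (em * t) z + A := by
        funext z; rw [hwbar]
      rw [pdx, hfun, deriv_add_const,
        deriv_const_mul _ ((hw_x (em * t)).differentiable (by simp) y)]
    have pdx2_wbar : ∀ y, pdx (pdx wbar) t y
        = c1 * deriv (deriv (fun z => w (em * t) z)) y := by
      intro y
      have hfun : (fun z => pdx wbar t z)
          = fun z => c1 * deriv (fun z => w (em * t) z) z := by
        funext z; exact pdx_wbar z
      rw [pdx, hfun, deriv_const_mul _ (hdw y)]
    have hdw2 : Differentiable ℝ (deriv (deriv (fun y => w (em * t) y))) :=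
      ((contDiff_infty_iff_deriv.mp
        ((contDiff_infty_iff_deriv.mp
          ((contDiff_infty_iff_deriv.mp hw_x').2)).2)).1)
    have pdx3_wbar : pdx (pdx (pdx wbar)) t x
        = c1 * deriv (deriv (deriv (fun z => w (em * t) z))) x := by
      have hfun : (fun z => pdx (pdx wbar) t z)
          = fun z => c1 * deriv (deriv (fun z => w (em * t) z)) z := by
        funext z; exact pdx2_wbar z
      rw [pdx, hfun, deriv_const_mul _ (hdw2 x)]
    have pdx3_w : pdx (pdx (pdx w)) (em * t) x
        = deriv (deriv (deriv (fun z => w (em * t) z))) x := rfl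
    rw [pdt_ηbar, key_c, heq2 (em * t) x, pdx3_wbar, pdx_wbar, pdx3_w]
    rw [pdx]; ring
end
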